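/- arXiv:1606.08995 — 2 statements merged into one kernel-verified Lean document; each statement's English description precedes it below -/
import Mathlib

section
/- Let M be a gcd-monoid. Say a quadruple (a₁,a₂,a₃,a₄) of elements of M admits a central cross if there exist x₁,x₂,x₃,x₄ in M with a₁ = x₁x₂, a₂ = x₃x₂, a₃ = x₃x₄, a₄ = x₁x₄. Then (a₁,a₂,a₃,a₄) admits a central cross if and only if there exist x, y in M with a₁ = x·(a₁ ∧̃ a₂), a₂ = y·(a₁ ∧̃ a₂), a₃ = y·(a₃ ∧̃ a₄), a₄ = x·(a₃ ∧̃ a₄), where ∧̃ denotes the right gcd. -/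
universe u

/-- `a` left-divides `b`. -/
def LeftDvd {M : Type*} [Monoid M] (a b : M) : Prop := ∃ x, a * x = b

/-- `a` right-divides `b`. -/
def RightDivides {M : Type*} [Monoid M] (a b : M) : Prop := ∃ x, x * a = b

/-- `m` is a right lcm of `a` and `b` (least upper bound for left divisibility). -/
def IsRightLcm {M : Type*} [Monoid M] (a b m : M) : Prop :=
  LeftDvd a m ∧ LeftDvd b m ∧ ∀ c, LeftDvd a c → LeftDvd b c → LeftDvd m c

/-- `m` is a left lcm of `a` and `b` (least upper bound for right divisibility). -/
def IsLeftLcm {M : Type*} [Monoid M] (a b m : M) : Prop :=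
  RightDivides a m ∧ RightDivides b m ∧ ∀ c, RightDivides a c → RightDivides b c → RightDivides m c

/-- `g` is a left gcd of `a` and `b` (greatest lower bound for left divisibility). -/
def IsLeftGcd {M : Type*} [Monoid M] (a b g : M) : Prop :=
  LeftDvd g a ∧ LeftDvd g b ∧ ∀ x, LeftDvd x a → LeftDvd x b → LeftDvd x g

/-- `g` is a right gcd of `a` and `b` (greatest lower bound for right divisibility). -/
def IsRightGcd {M : Type*} [Monoid M] (a b g : M) : Prop :=
  RightDivides g a ∧ RightDivides g b ∧ ∀ x, RightDivides x a → RightDivides x b → RightDivides x g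

/-- A quadruple admits a central cross. -/
def CentralCross {M : Type*} [Monoid M] (a₁ a₂ a₃ a₄ : M) : Prop :=
  ∃ x₁ x₂ x₃ x₄ : M, a₁ = x₁ * x₂ ∧ a₂ = x₃ * x₂ ∧ a₃ = x₃ * x₄ ∧ a₄ = x₁ * x₄

/-! Right division is compatible with right multiplication, so the right gcd of `x₁ * x₂` and
`x₃ * x₂` is `(x₁ ∧̃ x₃) * x₂`, and that of `x₃ * x₄` and `x₁ * x₄` is `(x₁ ∧̃ x₃) * x₄`. Writing
`x₁ = d * (x₁ ∧̃ x₃)` and `x₃ = e * (x₁ ∧̃ x₃)`, the cofactors `d` and `e` are the required `x` and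
`y`. Conversely, the factorizations through the right gcds are themselves a central cross. -/

section RightDivisibility

variable {M : Type*} [Monoid M] {a b c g h p q : M}

theorem rightDivides_mul_left (a b : M) : RightDivides b (a * b) := ⟨a, rfl⟩

theorem RightDivides.trans (hab : RightDivides a b) (hbc : RightDivides b c) :
    RightDivides a c := by
  obtain ⟨x, rfl⟩ := hab
  obtain ⟨y, rfl⟩ := hbc
  exact ⟨y * x, mul_assoc y x a⟩

theorem RightDivides.mul_right (hab : RightDivides a b) (c : M) :
    RightDivides (a * c) (b * c) := by
  obtain ⟨x, rfl⟩ := hab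
  exact ⟨x, (mul_assoc x a c).symm⟩

theorem RightDivides.of_mul_right [IsRightCancelMul M] (h : RightDivides (a * c) (b * c)) :
    RightDivides a b := by
  obtain ⟨x, hx⟩ := h
  exact ⟨x, mul_right_cancel (by rw [mul_assoc, hx])⟩

theorem RightDivides.antisymm [IsRightCancelMul M] (hunit : ∀ a b : M, a * b = 1 → a = 1)
    (hab : RightDivides a b) (hba : RightDivides b a) : a = b := by
  obtain ⟨x, rfl⟩ := hab
  obtain ⟨y, hy⟩ := hba
  have hyx : y * x = 1 := mul_right_cancel (by rw [mul_assoc, hy, one_mul] : y * x * a = 1 * a)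
  have hy1 : y = 1 := hunit y x hyx
  rw [hy1, one_mul] at hyx
  rw [hyx, one_mul]

theorem IsRightGcd.symm (hg : IsRightGcd a b g) : IsRightGcd b a g :=
  ⟨hg.2.1, hg.1, fun x hxb hxa ↦ hg.2.2 x hxa hxb⟩

theorem IsRightGcd.unique [IsRightCancelMul M] (hunit : ∀ a b : M, a * b = 1 → a = 1)
    (hg : IsRightGcd a b g) (hh : IsRightGcd a b h) : g = h :=
  (hg.2.2 h hh.1 hh.2.1).antisymm hunit (hh.2.2 g hg.1 hg.2.1) |>.symm

theorem IsRightGcd.mul_right [IsRightCancelMul M] (hg : IsRightGcd p q g)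
    (hh : IsRightGcd (p * c) (q * c) h) : IsRightGcd (p * c) (q * c) (g * c) := by
  refine ⟨hg.1.mul_right c, hg.2.1.mul_right c, fun x hxp hxq ↦ (hh.2.2 x hxp hxq).trans ?_⟩
  -- `c` right-divides `h`, and the cofactor is a common right divisor of `p` and `q`.
  obtain ⟨k, rfl⟩ := hh.2.2 c (rightDivides_mul_left p c) (rightDivides_mul_left q c)
  have hkg : RightDivides k g := hg.2.2 k hh.1.of_mul_right hh.2.1.of_mul_right
  exact hkg.mul_right c

end RightDivisibility

theorem stmt_6_general {M : Type*} [CancelMonoid M]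
    (hunit : ∀ a b : M, a * b = 1 → a = 1)
    (rgcd : M → M → M) (hrgcd : ∀ a b : M, IsRightGcd a b (rgcd a b))
    (a₁ a₂ a₃ a₄ : M) :
    CentralCross a₁ a₂ a₃ a₄ ↔
      ∃ x y : M, a₁ = x * rgcd a₁ a₂ ∧ a₂ = y * rgcd a₁ a₂ ∧
        a₃ = y * rgcd a₃ a₄ ∧ a₄ = x * rgcd a₃ a₄ := by
  constructor
  · rintro ⟨x₁, x₂, x₃, x₄, rfl, rfl, rfl, rfl⟩
    set g := rgcd x₁ x₃
    have hg : IsRightGcd x₁ x₃ g := hrgcd x₁ x₃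
    have h₁₂ : rgcd (x₁ * x₂) (x₃ * x₂) = g * x₂ :=
      (hrgcd _ _).unique hunit (hg.mul_right (hrgcd _ _))
    have h₃₄ : rgcd (x₃ * x₄) (x₁ * x₄) = g * x₄ :=
      (hrgcd _ _).unique hunit (hg.symm.mul_right (hrgcd _ _))
    obtain ⟨⟨d, hd⟩, ⟨e, he⟩, -⟩ := hg
    refine ⟨d, e, ?_, ?_, ?_, ?_⟩ <;>
      simp only [h₁₂, h₃₄, ← mul_assoc, hd, he]
  · rintro ⟨x, y, h₁, h₂, h₃, h₄⟩
    exact ⟨x, rgcd a₁ a₂, y, rgcd a₃ a₄, h₁, h₂, h₃, h₄⟩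

theorem stmt_6 {M : Type*} [CancelMonoid M]
    (hunit : ∀ a b : M, a * b = 1 → a = 1)
    (hgcdL : ∀ a b : M, ∃ g, IsLeftGcd a b g)
    (rgcd : M → M → M) (hrgcd : ∀ a b : M, IsRightGcd a b (rgcd a b))
    (a₁ a₂ a₃ a₄ : M) :
    CentralCross a₁ a₂ a₃ a₄ ↔
      ∃ x y : M, a₁ = x * rgcd a₁ a₂ ∧ a₂ = y * rgcd a₁ a₂ ∧
        a₃ = y * rgcd a₃ a₄ ∧ a₄ = x * rgcd a₃ a₄ :=
  stmt_6_general hunit rgcd hrgcd a₁ a₂ a₃ a₄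
end

section
/- Let M be a gcd-monoid. Say a quadruple (a₁,a₂,a₃,a₄) of elements of M admits a central cross if there exist x₁,x₂,x₃,x₄ with a₁ = x₁x₂, a₂ = x₃x₂, a₃ = x₃x₄, a₄ = x₁x₄. Suppose (a₁,a₂,a₃,a₄) and (b₁,b₂,b₃,b₄) admit central crosses, and c₁,c₂,c₃,c₄ in M satisfy c₁a₄ = c₄b₁ and c₂a₃ = c₃b₂. Then (c₁a₁, c₂a₂, c₃b₃, c₄b₄) admits a central cross. -/
universe u

/-! Write `a₁ = x₁x₂, a₂ = x₃x₂, …` and `b₁ = y₁y₂, …`. The hypotheses say that `(c₁x₁)x₄ = (c₄y₁)y₂`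
and `(c₂x₃)x₄ = (c₃y₃)y₂` are common left multiples of `x₄` and `y₂`, so both factor through the
left lcm `dx₄ = ey₂`: `c₁x₁ = pd`, `c₄y₁ = pe`, `c₂x₃ = qd`, `c₃y₃ = qe`. Then `p, dx₂, q, ey₄`
is the required central cross. -/

theorem IsLeftLcm.exists_factor {M : Type*} [RightCancelMonoid M] {u v L d e s t : M}
    (hL : IsLeftLcm u v L) (hd : d * u = L) (he : e * v = L) (h : s * u = t * v) :
    ∃ p, s = p * d ∧ t = p * e := by
  obtain ⟨p, hp⟩ := hL.2.2 (s * u) ⟨s, rfl⟩ ⟨t, h.symm⟩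
  refine ⟨p, mul_right_cancel (b := u) ?_, mul_right_cancel (b := v) ?_⟩
  · rw [mul_assoc, hd, hp]
  · rw [mul_assoc, he, hp, h]

theorem exists_common_factor_of_mul_eq_mul {M : Type*} [RightCancelMonoid M]
    (hlcmL : ∀ a b : M, (∃ c, RightDivides a c ∧ RightDivides b c) → ∃ m, IsLeftLcm a b m)
    {u v s t s' t' : M} (h : s * u = t * v) (h' : s' * u = t' * v) :
    ∃ d e p q, s = p * d ∧ t = p * e ∧ s' = q * d ∧ t' = q * e := by
  obtain ⟨L, hL⟩ := hlcmL u v ⟨s * u, ⟨s, rfl⟩, ⟨t, h.symm⟩⟩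
  obtain ⟨d, hd⟩ := hL.1
  obtain ⟨e, he⟩ := hL.2.1
  obtain ⟨p, hs, ht⟩ := hL.exists_factor hd he h
  obtain ⟨q, hs', ht'⟩ := hL.exists_factor hd he h'
  exact ⟨d, e, p, q, hs, ht, hs', ht'⟩

theorem stmt_7_general {M : Type*} [CancelMonoid M]
    (hlcmL : ∀ a b : M, (∃ c, RightDivides a c ∧ RightDivides b c) → ∃ m, IsLeftLcm a b m)
    (a₁ a₂ a₃ a₄ b₁ b₂ b₃ b₄ c₁ c₂ c₃ c₄ : M)
    (ha : CentralCross a₁ a₂ a₃ a₄) (hb : CentralCross b₁ b₂ b₃ b₄)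
    (h1 : c₁ * a₄ = c₄ * b₁) (h2 : c₂ * a₃ = c₃ * b₂) :
    CentralCross (c₁ * a₁) (c₂ * a₂) (c₃ * b₃) (c₄ * b₄) := by
  obtain ⟨x₁, x₂, x₃, x₄, rfl, rfl, rfl, rfl⟩ := ha
  obtain ⟨y₁, y₂, y₃, y₄, rfl, rfl, rfl, rfl⟩ := hb
  rw [← mul_assoc, ← mul_assoc] at h1 h2
  obtain ⟨d, e, p, q, hp₁, hp₄, hq₂, hq₃⟩ := exists_common_factor_of_mul_eq_mul hlcmL h1 h2
  refine ⟨p, d * x₂, q, e * y₄, ?_, ?_, ?_, ?_⟩ <;>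
    rw [← mul_assoc, ← mul_assoc] <;> simp only [hp₁, hp₄, hq₂, hq₃, mul_assoc]

theorem stmt_7 {M : Type*} [CancelMonoid M]
    (hunit : ∀ a b : M, a * b = 1 → a = 1)
    (hgcdL : ∀ a b : M, ∃ g, IsLeftGcd a b g)
    (hgcdR : ∀ a b : M, ∃ g, IsRightGcd a b g)
    (hlcmL : ∀ a b : M, (∃ c, RightDivides a c ∧ RightDivides b c) → ∃ m, IsLeftLcm a b m)
    (a₁ a₂ a₃ a₄ b₁ b₂ b₃ b₄ c₁ c₂ c₃ c₄ : M)
    (ha : CentralCross a₁ a₂ a₃ a₄) (hb : CentralCross b₁ b₂ b₃ b₄)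
    (h1 : c₁ * a₄ = c₄ * b₁) (h2 : c₂ * a₃ = c₃ * b₂) :
    CentralCross (c₁ * a₁) (c₂ * a₂) (c₃ * b₃) (c₄ * b₄) :=
  stmt_7_general hlcmL a₁ a₂ a₃ a₄ b₁ b₂ b₃ b₄ c₁ c₂ c₃ c₄ ha hb h1 h2
end
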